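/- A simple graph G is trivially perfect if and only if its utter graph u(G) is trivially perfect. -/

import Mathlib

open SimpleGraph

universe u

variable {V : Type u}

/-- The clique number of a graph, as an extended natural number:
the supremum of the cardinalities of its (finite) cliques. -/
noncomputable def cliqueNumber (G : SimpleGraph V) : ℕ∞ :=
  ⨆ (t : Finset V) (_ : G.IsClique (t : Set V)), (t.card : ℕ∞)

/-- A graph is perfect if every induced subgraph has chromatic number equal
to its clique number. -/
def IsPerfect (G : SimpleGraph V) : Prop :=
  ∀ s : Set V, (G.induce s).chromaticNumber = cliqueNumber (G.induce s)

/-- The contraction `G/F` of a set `F` of edges: vertices are the connected components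
of the spanning subgraph `(V, F)`, two distinct components being adjacent iff `G` has
an edge between them. -/
def contractEdges (G : SimpleGraph V) (F : Set (Sym2 V)) :
    SimpleGraph (SimpleGraph.fromEdgeSet F).ConnectedComponent where
  Adj c d := c ≠ d ∧ ∃ x y : V,
      (SimpleGraph.fromEdgeSet F).connectedComponentMk x = c ∧
      (SimpleGraph.fromEdgeSet F).connectedComponentMk y = d ∧ G.Adj x y
  symm := by
    refine ⟨?_⟩
    rintro c d ⟨hne, x, y, hx, hy, hxy⟩
    exact ⟨hne.symm, y, x, hy, hx, hxy.symm⟩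
  loopless := ⟨fun c h => h.1 rfl⟩

/-- A graph is contraction perfect if the contraction of any set of its edges
yields a perfect graph. -/
def IsContractionPerfect (G : SimpleGraph V) : Prop :=
  ∀ F : Set (Sym2 V), F ⊆ G.edgeSet → IsPerfect (contractEdges G F)

/-- `G` contains a hole (induced cycle, `n ≥ 4`) on `n` vertices. -/
def HasHole (G : SimpleGraph V) (n : ℕ) : Prop :=
  4 ≤ n ∧ ∃ s : Set V, Nonempty (G.induce s ≃g cycleGraph n)

/-- `G` contains an antihole (induced complement of a cycle, `n ≥ 4`) on `n` vertices. -/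
def HasAntihole (G : SimpleGraph V) (n : ℕ) : Prop :=
  4 ≤ n ∧ ∃ s : Set V, Nonempty ((G.induce s)ᶜ ≃g cycleGraph n)

/-- `u`, `v` and `w 0, …, w (p-1)` (thought of as `w_1, …, w_p`) form an expanded antihole
in `G`: `uv` is an edge, the `w i` are distinct vertices different from `u` and `v`
inducing an antipath in this order, `u` is adjacent exactly to `w_2, …, w_{p-2}` among them,
and `v` is adjacent exactly to `w_3, …, w_{p-1}` among them. -/
def IsExpandedAntihole (G : SimpleGraph V) (u v : V) (p : ℕ) (w : Fin p → V) : Prop :=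
  6 ≤ p ∧ Even p ∧ G.Adj u v ∧ Function.Injective w ∧
  (∀ i, w i ≠ u) ∧ (∀ i, w i ≠ v) ∧
  (∀ i j, G.Adj (w i) (w j) ↔ (i ≠ j ∧ (i : ℕ) + 1 ≠ (j : ℕ) ∧ (j : ℕ) + 1 ≠ (i : ℕ))) ∧
  (∀ i, G.Adj u (w i) ↔ (1 ≤ (i : ℕ) ∧ (i : ℕ) ≤ p - 3)) ∧
  (∀ i, G.Adj v (w i) ↔ (2 ≤ (i : ℕ) ∧ (i : ℕ) ≤ p - 2))

/-- The contraction `G/uv` of a single edge `uv`: delete `u` and `v` and add a new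
vertex (here `none`) adjacent to every vertex of `N(u) ∪ N(v)`. -/
def contractOne (G : SimpleGraph V) (u v : V) :
    SimpleGraph (Option {x : V // x ≠ u ∧ x ≠ v}) where
  Adj a b :=
    match a, b with
    | some x, some y => G.Adj x.1 y.1
    | some x, none => G.Adj x.1 u ∨ G.Adj x.1 v
    | none, some y => G.Adj u y.1 ∨ G.Adj v y.1
    | none, none => False
  symm := by
    refine ⟨?_⟩
    rintro (_ | x) (_ | y) h
    · exact h
    · exact h.imp (fun h' => h'.symm) (fun h' => h'.symm)
    · exact h.imp (fun h' => h'.symm) (fun h' => h'.symm)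
    · exact h.symm
  loopless := by
    refine ⟨?_⟩
    rintro (_ | x) h
    · exact h
    · exact G.loopless.irrefl _ h

/-- The utter graph of `G`, on vertex set `V(G) ∪ E(G)`. -/
def utterGraph (G : SimpleGraph V) : SimpleGraph (V ⊕ G.edgeSet) where
  Adj a b :=
    match a, b with
    | Sum.inl x, Sum.inl y => G.Adj x y
    | Sum.inl x, Sum.inr e => x ∈ (e : Sym2 V) ∨ ∃ y ∈ (e : Sym2 V), G.Adj x y
    | Sum.inr e, Sum.inl x => x ∈ (e : Sym2 V) ∨ ∃ y ∈ (e : Sym2 V), G.Adj x y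
    | Sum.inr e, Sum.inr f => e ≠ f ∧
        ((∃ x, x ∈ (e : Sym2 V) ∧ x ∈ (f : Sym2 V)) ∨
          ∃ x ∈ (e : Sym2 V), ∃ y ∈ (f : Sym2 V), G.Adj x y)
  symm := by
    refine ⟨?_⟩
    rintro (x | e) (y | f) h
    · exact h.symm
    · exact h
    · exact h
    · exact ⟨h.1.symm, h.2.imp (fun ⟨x, hx⟩ => ⟨x, hx.2, hx.1⟩)
        (fun ⟨x, hx, y, hy, hxy⟩ => ⟨y, hy, x, hx, hxy.symm⟩)⟩
  loopless := by
    refine ⟨?_⟩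
    rintro (x | e) h
    · exact G.loopless.irrefl _ h
    · exact h.1 rfl

/-- A stable (independent) set: a set of pairwise nonadjacent vertices. -/
def IsStableSet (G : SimpleGraph V) (s : Set V) : Prop :=
  ∀ x ∈ s, ∀ y ∈ s, ¬G.Adj x y

/-- A co-2-plex: a set of vertices inducing a subgraph of maximum degree at most one. -/
def IsCo2Plex (G : SimpleGraph V) (S : Set V) : Prop :=
  ∀ x ∈ S, ∀ y ∈ S, ∀ z ∈ S, G.Adj x y → G.Adj x z → y = z

/-- The graph obtained from `G` by adding a true twin (`none`) of the vertex `v`. -/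
def addTrueTwin (G : SimpleGraph V) (v : V) : SimpleGraph (Option V) where
  Adj a b :=
    match a, b with
    | some x, some y => G.Adj x y
    | some x, none => x = v ∨ G.Adj x v
    | none, some y => y = v ∨ G.Adj y v
    | none, none => False
  symm := by refine ⟨?_⟩; rintro (_ | x) (_ | y) h <;> first | exact h | exact h.symm
  loopless := by
    refine ⟨?_⟩
    rintro (_ | x) h
    · exact h
    · exact G.loopless.irrefl _ h

/-- The graph obtained from `G` by adding a false twin (`none`) of the vertex `v`. -/
def addFalseTwin (G : SimpleGraph V) (v : V) : SimpleGraph (Option V) where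
  Adj a b :=
    match a, b with
    | some x, some y => G.Adj x y
    | some x, none => G.Adj x v
    | none, some y => G.Adj y v
    | none, none => False
  symm := by refine ⟨?_⟩; rintro (_ | x) (_ | y) h <;> first | exact h | exact h.symm
  loopless := by
    refine ⟨?_⟩
    rintro (_ | x) h
    · exact h
    · exact G.loopless.irrefl _ h

/-- A trivially perfect graph: no induced path on 4 vertices and no induced cycle on
4 vertices. -/
def IsTriviallyPerfect (G : SimpleGraph V) : Prop :=
  (¬∃ s : Set V, Nonempty (G.induce s ≃g SimpleGraph.pathGraph 4)) ∧
  (¬∃ s : Set V, Nonempty (G.induce s ≃g cycleGraph 4))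

/-! Trivially perfect graphs are exactly the graphs in which the closed neighbourhoods of any two
adjacent vertices are nested. In `u(G)` the closed neighbourhood of a node is the set of nodes
meeting the union of the closed neighbourhoods of its endpoints; when `G` has nested
neighbourhoods that union is the closed neighbourhood of a single endpoint, so nestedness
transfers from `G` to `u(G)`. Conversely `G` is an induced subgraph of `u(G)`, and being trivially
perfect is inherited by induced subgraphs. -/

namespace SimpleGraph

variable {W : Type*} {G : SimpleGraph V} {H : SimpleGraph W}

def closedNbhd (G : SimpleGraph V) (x : V) : Set V := insert x (G.neighborSet x)

theorem mem_closedNbhd {x y : V} : y ∈ G.closedNbhd x ↔ y = x ∨ G.Adj x y := Iff.rfl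

theorem self_mem_closedNbhd (x : V) : x ∈ G.closedNbhd x := Or.inl rfl

theorem mem_closedNbhd_comm {x y : V} : y ∈ G.closedNbhd x ↔ x ∈ G.closedNbhd y := by
  simp only [mem_closedNbhd, eq_comm, G.adj_comm]

theorem Embedding.mem_closedNbhd_iff (f : H ↪g G) {x y : W} :
    f y ∈ G.closedNbhd (f x) ↔ y ∈ H.closedNbhd x := by
  simp only [SimpleGraph.mem_closedNbhd, f.injective.eq_iff, f.map_adj_iff]

def HasNestedClosedNbhds (G : SimpleGraph V) : Prop :=
  ∀ ⦃x y : V⦄, G.Adj x y → G.closedNbhd x ⊆ G.closedNbhd y ∨ G.closedNbhd y ⊆ G.closedNbhd x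

theorem HasNestedClosedNbhds.of_embedding (hG : G.HasNestedClosedNbhds) (f : H ↪g G) :
    H.HasNestedClosedNbhds := by
  intro x y hxy
  refine (hG (f.map_adj_iff.2 hxy)).imp ?_ ?_ <;>
    exact fun h z hz => f.mem_closedNbhd_iff.1 (h (f.mem_closedNbhd_iff.2 hz))

theorem not_hasNestedClosedNbhds_iff : ¬G.HasNestedClosedNbhds ↔ ∃ x y a d, G.Adj x y ∧
    a ∈ G.closedNbhd x ∧ a ∉ G.closedNbhd y ∧ d ∈ G.closedNbhd y ∧ d ∉ G.closedNbhd x := by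
  simp only [HasNestedClosedNbhds, not_forall, not_or, Set.not_subset, exists_prop]
  exact ⟨fun ⟨x, y, hxy, ⟨a, ha⟩, ⟨d, hd⟩⟩ => ⟨x, y, a, d, hxy, ha.1, ha.2, hd.1, hd.2⟩,
    fun ⟨x, y, a, d, hxy, ha, ha', hd, hd'⟩ => ⟨x, y, hxy, ⟨a, ha, ha'⟩, ⟨d, hd, hd'⟩⟩⟩

theorem not_hasNestedClosedNbhds_pathGraph_four : ¬(pathGraph 4).HasNestedClosedNbhds :=
  not_hasNestedClosedNbhds_iff.2 ⟨1, 2, 0, 3, by simp [mem_closedNbhd, pathGraph_adj]⟩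

theorem not_hasNestedClosedNbhds_cycleGraph_four : ¬(cycleGraph 4).HasNestedClosedNbhds :=
  not_hasNestedClosedNbhds_iff.2 ⟨1, 2, 0, 3, by simp only [mem_closedNbhd]; decide⟩

theorem isIndContained_of_not_hasNestedClosedNbhds (h : ¬G.HasNestedClosedNbhds) :
    pathGraph 4 ⊴ G ∨ cycleGraph 4 ⊴ G := by
  obtain ⟨x, y, a, d, hxy, ha, ha', hd, hd'⟩ := not_hasNestedClosedNbhds_iff.1 h
  simp only [mem_closedNbhd, not_or] at ha ha' hd hd'
  have hxa : G.Adj x a := ha.resolve_left (by rintro rfl; exact ha'.2 hxy.symm)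
  have hyd : G.Adj y d := hd.resolve_left (by rintro rfl; exact hd'.2 hxy)
  have had : a ≠ d := by rintro rfl; exact ha'.2 hyd
  have hinj : Function.Injective ![a, x, y, d] := by
    intro i j hij
    fin_cases i <;> fin_cases j <;> simp_all [eq_comm, hxa.ne, hxy.ne, hyd.ne]
  by_cases had' : G.Adj a d
  · refine .inr ⟨⟨⟨![a, x, y, d], hinj⟩, fun {i j} => ?_⟩⟩
    fin_cases i <;> fin_cases j <;> simp_all [G.adj_comm] <;> decide
  · refine .inl ⟨⟨⟨![a, x, y, d], hinj⟩, fun {i j} => ?_⟩⟩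
    fin_cases i <;> fin_cases j <;> simp_all [G.adj_comm, pathGraph_adj]

theorem HasNestedClosedNbhds.subset_or_subset_of_mem (hG : G.HasNestedClosedNbhds) {x y : V}
    (h : y ∈ G.closedNbhd x) :
    G.closedNbhd x ⊆ G.closedNbhd y ∨ G.closedNbhd y ⊆ G.closedNbhd x := by
  rcases h with rfl | h
  · exact .inl le_rfl
  · exact hG h

theorem HasNestedClosedNbhds.subset_or_subset_of_mem_of_subset (hG : G.HasNestedClosedNbhds)
    {w w' y : V} (hy : y ∈ G.closedNbhd w) (h : G.closedNbhd y ⊆ G.closedNbhd w') :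
    G.closedNbhd w ⊆ G.closedNbhd w' ∨ G.closedNbhd w' ⊆ G.closedNbhd w := by
  rcases hG.subset_or_subset_of_mem hy with hwy | hyw
  · exact .inl (hwy.trans h)
  · exact hG.subset_or_subset_of_mem (mem_closedNbhd_comm.1 (h (mem_closedNbhd_comm.1 hy)))

end SimpleGraph

section TriviallyPerfect

variable {W : Type*} {G : SimpleGraph V} {H : SimpleGraph W}

theorem isTriviallyPerfect_iff_not_isIndContained :
    IsTriviallyPerfect G ↔ ¬pathGraph 4 ⊴ G ∧ ¬cycleGraph 4 ⊴ G := by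
  have symm_iso {A : SimpleGraph (Fin 4)} :
      (∃ s : Set V, Nonempty (G.induce s ≃g A)) ↔ A ⊴ G := by
    rw [isIndContained_iff_exists_iso_induce]
    exact exists_congr fun _ => ⟨fun ⟨e⟩ => ⟨e.symm⟩, fun ⟨e⟩ => ⟨e.symm⟩⟩
  rw [IsTriviallyPerfect, symm_iso, symm_iso]

theorem IsTriviallyPerfect.of_isIndContained (hH : IsTriviallyPerfect H) (h : G ⊴ H) :
    IsTriviallyPerfect G := by
  rw [isTriviallyPerfect_iff_not_isIndContained] at hH ⊢
  exact ⟨fun hP => hH.1 (hP.trans h), fun hC => hH.2 (hC.trans h)⟩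

theorem isTriviallyPerfect_iff_hasNestedClosedNbhds :
    IsTriviallyPerfect G ↔ G.HasNestedClosedNbhds := by
  rw [isTriviallyPerfect_iff_not_isIndContained]
  refine ⟨fun ⟨hP, hC⟩ => by_contra fun h =>
    (isIndContained_of_not_hasNestedClosedNbhds h).elim hP hC, fun hG => ⟨?_, ?_⟩⟩
  · rintro ⟨f⟩
    exact not_hasNestedClosedNbhds_pathGraph_four (hG.of_embedding f)
  · rintro ⟨f⟩
    exact not_hasNestedClosedNbhds_cycleGraph_four (hG.of_embedding f)

end TriviallyPerfect

section UtterGraph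

def utterBase (G : SimpleGraph V) : V ⊕ G.edgeSet → Set V
  | .inl x => {x}
  | .inr e => {x | x ∈ (e : Sym2 V)}

def utterBall (G : SimpleGraph V) (ν : V ⊕ G.edgeSet) : Set V :=
  {y | ∃ x ∈ utterBase G ν, y ∈ G.closedNbhd x}

variable {G : SimpleGraph V}

theorem utterGraph_adj_iff {ν μ : V ⊕ G.edgeSet} :
    (utterGraph G).Adj ν μ ↔ ν ≠ μ ∧ (utterBase G μ ∩ utterBall G ν).Nonempty := by
  rcases ν with x | ⟨e, he⟩ <;> rcases μ with y | ⟨f, hf⟩ <;>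
    simp only [utterGraph, utterBase, utterBall, mem_closedNbhd, Set.Nonempty, Set.mem_inter_iff,
      Set.mem_singleton_iff, Set.mem_ofPred_eq, SetLike.setOfPred_mem_eq, SetLike.mem_coe, ne_eq,
      Sum.inl.injEq, Sum.inr.injEq, Subtype.mk.injEq, reduceCtorEq, exists_eq_left] <;>
    grind [SimpleGraph.Adj.ne, SimpleGraph.adj_comm]

theorem utterBase_nonempty (ν : V ⊕ G.edgeSet) : (utterBase G ν).Nonempty := by
  rcases ν with x | e
  exacts [Set.singleton_nonempty x, ⟨_, Sym2.out_fst_mem e.1⟩]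

theorem utterBase_subset_utterBall (ν : V ⊕ G.edgeSet) : utterBase G ν ⊆ utterBall G ν :=
  fun x hx => ⟨x, hx, self_mem_closedNbhd x⟩

theorem closedNbhd_utterGraph (ν : V ⊕ G.edgeSet) :
    (utterGraph G).closedNbhd ν = {μ | (utterBase G μ ∩ utterBall G ν).Nonempty} := by
  ext μ
  rw [mem_closedNbhd, utterGraph_adj_iff, Set.mem_ofPred_eq]
  rcases eq_or_ne μ ν with rfl | hne
  · simpa using
      (utterBase_nonempty μ).mono (Set.subset_inter le_rfl (utterBase_subset_utterBall μ))
  · simp [hne, hne.symm]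

theorem SimpleGraph.HasNestedClosedNbhds.exists_utterBall_eq (hG : G.HasNestedClosedNbhds)
    (ν : V ⊕ G.edgeSet) : ∃ w ∈ utterBase G ν, utterBall G ν = G.closedNbhd w := by
  rcases ν with x | ⟨e, he⟩
  · exact ⟨x, rfl, by simp [utterBall, utterBase]⟩
  induction e using Sym2.ind with
  | h u v =>
    have huv : G.Adj u v := he
    simp only [utterBall, utterBase, Set.mem_ofPred_eq, Sym2.mem_iff, exists_eq_or_imp,
      exists_eq_left]
    rcases hG huv with h | h
    · exact .inr (Set.ext fun _ => or_iff_right_of_imp (@h _))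
    · exact .inl (Set.ext fun _ => or_iff_left_of_imp (@h _))

theorem SimpleGraph.HasNestedClosedNbhds.utterGraph (hG : G.HasNestedClosedNbhds) :
    (utterGraph G).HasNestedClosedNbhds := by
  intro ν μ hadj
  obtain ⟨w, -, hν⟩ := hG.exists_utterBall_eq ν
  obtain ⟨w', -, hμ⟩ := hG.exists_utterBall_eq μ
  obtain ⟨y, hyμ, hyν⟩ := (utterGraph_adj_iff.1 hadj).2
  have hsub : G.closedNbhd y ⊆ G.closedNbhd w' := hμ ▸ fun z hz => ⟨y, hyμ, hz⟩
  rw [closedNbhd_utterGraph, closedNbhd_utterGraph, hν, hμ]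
  refine (hG.subset_or_subset_of_mem_of_subset (hν ▸ hyν) hsub).imp ?_ ?_ <;>
    exact fun h κ ⟨z, hz, hzν⟩ => ⟨z, hz, h hzν⟩

theorem isIndContained_utterGraph : G ⊴ utterGraph G := ⟨⟨Function.Embedding.inl, Iff.rfl⟩⟩

end UtterGraph

/-- A graph is trivially perfect iff its utter graph is trivially
perfect. -/
theorem triviallyPerfect_iff_utter_triviallyPerfect {V : Type u} (G : SimpleGraph V) :
    IsTriviallyPerfect G ↔ IsTriviallyPerfect (utterGraph G) := by
  refine ⟨fun h => ?_, fun h => h.of_isIndContained isIndContained_utterGraph⟩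
  rw [isTriviallyPerfect_iff_hasNestedClosedNbhds] at h ⊢
  exact h.utterGraph
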